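/- arXiv:2208.10173 — 4 statements merged into one kernel-verified Lean document; each statement's English description precedes it below -/
import Mathlib

section
/- Let (y_k)_{k≥0} be a strictly decreasing sequence of positive real numbers converging to 0, let η > 1, and assume there exists ρ ≥ 1 with (1/ρ) · y_k^η ≤ y_k − y_{k+1} ≤ ρ · y_k^η for all k ≥ 0. Then lim_{k→∞} ( 1 − ln(k·(y_k − y_{k+1}) + y_k) / ln((y_k − y_{k+1})/2) ) = (η−1)/η. -/
/-!
Comparing `x ↦ x ^ (1 - η)` with its tangent line at `y_k` gives
`y_{k+1} ^ (1 - η) ≥ y_k ^ (1 - η) + (η - 1) / ρ`, so `k * y_k ^ (η - 1)` stays bounded and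
`k (y_k - y_{k+1}) = O(y_k)`. Hence `ln (k (y_k - y_{k+1}) + y_k) = ln y_k + O(1)` and
`ln ((y_k - y_{k+1}) / 2) = η ln y_k + O(1)`; as `ln y_k → -∞`, their quotient tends to `1 / η`.
-/

open Filter Topology Real Asymptotics

lemma one_add_mul_one_sub_le_rpow_neg {p t : ℝ} (hp : 0 ≤ p) (ht0 : 0 < t) (ht1 : t ≤ 1) :
    1 + p * (1 - t) ≤ t ^ (-p) := by
  rcases le_total p 1 with hp1 | hp1
  · -- `t ^ (-p) ≥ 1 / (1 - p (1 - t)) ≥ 1 + p (1 - t)`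
    have hBernoulli : t ^ p ≤ 1 + p * (t - 1) := by
      simpa using rpow_one_add_le_one_add_mul_self (s := t - 1) (by linarith) hp hp1
    have htp : 0 < t ^ p := rpow_pos_of_pos ht0 _
    rw [rpow_neg ht0.le, ← one_div, le_div_iff₀ htp]
    nlinarith [mul_le_mul_of_nonneg_left hBernoulli (by nlinarith : (0:ℝ) ≤ 1 + p * (1 - t)),
      sq_nonneg (p * (1 - t))]
  · have hBernoulli : 1 + p * (1 / t - 1) ≤ (1 + (1 / t - 1)) ^ p :=
      one_add_mul_self_le_rpow_one_add (by linarith [one_div_pos.2 ht0]) hp1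
    have hs : 1 - t ≤ 1 / t - 1 := by
      rw [div_sub' ht0.ne', le_div_iff₀ ht0]; nlinarith
    rw [show 1 + (1 / t - 1) = t⁻¹ by ring, inv_rpow ht0.le, ← rpow_neg ht0.le] at hBernoulli
    nlinarith

lemma rpow_one_sub_add_le {η a b : ℝ} (hη : 1 ≤ η) (hb : 0 < b) (hba : b ≤ a) :
    a ^ (1 - η) + (η - 1) * (a - b) / a ^ η ≤ b ^ (1 - η) := by
  have ha : 0 < a := hb.trans_le hba
  have key := one_add_mul_one_sub_le_rpow_neg (p := η - 1) (by linarith) (div_pos hb ha)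
    ((div_le_one ha).2 hba)
  rw [neg_sub, div_rpow hb.le ha.le, le_div_iff₀ (rpow_pos_of_pos ha _)] at key
  have haη : a ^ (1 - η) * a ^ η = a := by rw [← rpow_add ha]; simp
  have hexpand : a ^ (1 - η) + (η - 1) * (a - b) / a ^ η
      = (1 + (η - 1) * (1 - b / a)) * a ^ (1 - η) := by
    field_simp
    linear_combination (η - 1) * (b - a) * haη
  linarith

lemma abs_log_sub_log_le_max {a b x y : ℝ} (ha : 0 < a) (hx : 0 < x) (hlo : a * x ≤ y)
    (hhi : y ≤ b * x) : |log y - log x| ≤ max |log a| |log b| := by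
  have hy : 0 < y := (mul_pos ha hx).trans_le hlo
  have hb : 0 < b := pos_of_mul_pos_left (hy.trans_le hhi) hx.le
  have hlog_lo := log_le_log (mul_pos ha hx) hlo
  have hlog_hi := log_le_log hy hhi
  rw [log_mul ha.ne' hx.ne'] at hlog_lo
  rw [log_mul hb.ne' hx.ne'] at hlog_hi
  rw [abs_le]
  constructor <;> linarith [neg_abs_le (log a), le_abs_self (log b), le_max_left |log a| |log b|,
    le_max_right |log a| |log b|]

lemma tendsto_div_of_sub_isBigO_one {α : Type*} {l : Filter α} {L u v : α → ℝ} {η : ℝ}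
    (hη : η ≠ 0) (hL : Tendsto (fun x => |L x|) l atTop)
    (hu : (fun x => u x - L x) =O[l] (fun _ => (1 : ℝ)))
    (hv : (fun x => v x - η * L x) =O[l] (fun _ => (1 : ℝ))) :
    Tendsto (fun x => u x / v x) l (𝓝 η⁻¹) := by
  have huL : u ~[l] L := hu.trans_isLittleO ((isLittleO_one_left_iff ℝ).2 hL)
  have hηL : Tendsto (fun x => ‖η * L x‖) l atTop := by
    simpa only [norm_mul, Real.norm_eq_abs] using hL.const_mul_atTop (abs_pos.2 hη)
  have hvL : v ~[l] (fun x => η * L x) := hv.trans_isLittleO ((isLittleO_one_left_iff ℝ).2 hηL)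
  refine (huL.div hvL).symm.tendsto_nhds (tendsto_const_nhds.congr' ?_)
  filter_upwards [hL.eventually_gt_atTop 0] with x hx
  have : L x ≠ 0 := abs_pos.1 hx
  simp only [Pi.div_apply]
  field_simp

section Comparable

variable {ys : ℕ → ℝ} {η c C : ℝ}

lemma nat_mul_le_rpow_one_sub (hpos : ∀ k, 0 < ys k) (hη : 1 < η) (hc : 0 < c)
    (hlow : ∀ k, c * ys k ^ η ≤ ys k - ys (k + 1)) (k : ℕ) :
    k * ((η - 1) * c) ≤ ys k ^ (1 - η) := by
  induction k with
  | zero => simpa using (rpow_pos_of_pos (hpos 0) _).le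
  | succ k ih =>
    have hyη := rpow_pos_of_pos (hpos k) η
    have hstep := rpow_one_sub_add_le hη.le (hpos (k + 1))
      (by nlinarith [hlow k] : ys (k + 1) ≤ ys k)
    have hgap : (η - 1) * c ≤ (η - 1) * (ys k - ys (k + 1)) / ys k ^ η := by
      rw [le_div_iff₀ hyη, mul_assoc]
      exact mul_le_mul_of_nonneg_left (hlow k) (by linarith)
    push_cast
    linarith

lemma nat_mul_sub_succ_le (hpos : ∀ k, 0 < ys k) (hη : 1 < η) (hc : 0 < c)
    (hcomp : ∀ k, c * ys k ^ η ≤ ys k - ys (k + 1) ∧ ys k - ys (k + 1) ≤ C * ys k ^ η)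
    (k : ℕ) : k * (ys k - ys (k + 1)) ≤ C / ((η - 1) * c) * ys k := by
  have hy := hpos k
  have hdecay : k * ((η - 1) * c) * ys k ^ (η - 1) ≤ 1 := by
    calc _ ≤ ys k ^ (1 - η) * ys k ^ (η - 1) := by
          gcongr; exact nat_mul_le_rpow_one_sub hpos hη hc (fun k => (hcomp k).1) k
      _ = 1 := by rw [← rpow_add hy]; simp
  have hyη := rpow_pos_of_pos hy η
  have hC : 0 ≤ C := by nlinarith [hcomp k]
  rw [div_mul_eq_mul_div, le_div_iff₀ (by nlinarith)]
  calc k * (ys k - ys (k + 1)) * ((η - 1) * c)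
      ≤ k * (C * ys k ^ η) * ((η - 1) * c) := by gcongr; exact (hcomp k).2
    _ = C * ys k * (k * ((η - 1) * c) * ys k ^ (η - 1)) := by
        rw [show ys k ^ η = ys k ^ (η - 1) * ys k by rw [← rpow_add_one hy.ne']; ring_nf]; ring
    _ ≤ C * ys k := mul_le_of_le_one_right (by positivity) hdecay

lemma isBigO_log_nucleus_sub_log (hpos : ∀ k, 0 < ys k) (hη : 1 < η) (hc : 0 < c)
    (hcomp : ∀ k, c * ys k ^ η ≤ ys k - ys (k + 1) ∧ ys k - ys (k + 1) ≤ C * ys k ^ η) :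
    (fun k : ℕ => log (k * (ys k - ys (k + 1)) + ys k) - log (ys k)) =O[atTop]
      (fun _ => (1 : ℝ)) := by
  refine isBigO_of_le' (l := atTop) (c := |log (1 + C / ((η - 1) * c))|)
    fun k => ?_
  have hgap : 0 ≤ k * (ys k - ys (k + 1)) :=
    mul_nonneg k.cast_nonneg ((mul_pos hc (rpow_pos_of_pos (hpos k) η)).le.trans (hcomp k).1)
  simpa using abs_log_sub_log_le_max one_pos (hpos k) (by linarith)
    (by linarith [nat_mul_sub_succ_le hpos hη hc hcomp k])

lemma isBigO_log_half_gap_sub_mul_log (hpos : ∀ k, 0 < ys k) (hc : 0 < c)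
    (hcomp : ∀ k, c * ys k ^ η ≤ ys k - ys (k + 1) ∧ ys k - ys (k + 1) ≤ C * ys k ^ η) :
    (fun k : ℕ => log ((ys k - ys (k + 1)) / 2) - η * log (ys k)) =O[atTop]
      (fun _ => (1 : ℝ)) := by
  refine isBigO_of_le' (l := atTop) (c := max |log (c / 2)| |log (C / 2)|) fun k => ?_
  rw [← log_rpow (hpos k)]
  simpa using abs_log_sub_log_le_max (half_pos hc) (rpow_pos_of_pos (hpos k) η)
    (by linarith [(hcomp k).1]) (by linarith [(hcomp k).2])

end Comparable

theorem tail_nucleus_formula_general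
    (ys : ℕ → ℝ) (η ρ : ℝ)
    (hpos : ∀ k, 0 < ys k)
    (hlim : Filter.Tendsto ys Filter.atTop (nhds 0))
    (hη : 1 < η) (hρ : 1 ≤ ρ)
    (hcomp : ∀ k : ℕ,
      (1/ρ) * ys k ^ η ≤ ys k - ys (k+1) ∧
      ys k - ys (k+1) ≤ ρ * ys k ^ η) :
    Filter.Tendsto
      (fun k : ℕ =>
        1 - Real.log ((k : ℝ) * (ys k - ys (k+1)) + ys k) /
              Real.log ((ys k - ys (k+1)) / 2))
      Filter.atTop (nhds ((η - 1) / η)) := by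
  have hc : 0 < 1 / ρ := one_div_pos.2 (by linarith)
  have hlog : Tendsto (fun k => |log (ys k)|) atTop atTop :=
    tendsto_abs_atBot_atTop.comp <| tendsto_log_nhdsGT_zero.comp <|
      tendsto_nhdsWithin_iff.2 ⟨hlim, Eventually.of_forall hpos⟩
  have hratio := tendsto_div_of_sub_isBigO_one (by linarith) hlog
    (isBigO_log_nucleus_sub_log hpos hη hc hcomp) (isBigO_log_half_gap_sub_mul_log hpos hc hcomp)
  convert tendsto_const_nhds.sub hratio using 2
  field_simp

/-- Tail-nucleus formula: if `y_k − y_{k+1} ≍ y_k^η` with `η > 1`, then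
`1 − ln(k(y_k − y_{k+1}) + y_k) / ln((y_k − y_{k+1})/2) → (η−1)/η`. -/
theorem tail_nucleus_formula
    (ys : ℕ → ℝ) (η ρ : ℝ)
    (hpos : ∀ k, 0 < ys k) (hanti : StrictAnti ys)
    (hlim : Filter.Tendsto ys Filter.atTop (nhds 0))
    (hη : 1 < η) (hρ : 1 ≤ ρ)
    (hcomp : ∀ k : ℕ,
      (1/ρ) * ys k ^ η ≤ ys k - ys (k+1) ∧
      ys k - ys (k+1) ≤ ρ * ys k ^ η) :
    Filter.Tendsto
      (fun k : ℕ =>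
        1 - Real.log ((k : ℝ) * (ys k - ys (k+1)) + ys k) /
              Real.log ((ys k - ys (k+1)) / 2))
      Filter.atTop (nhds ((η - 1) / η)) :=
  tail_nucleus_formula_general ys η ρ hpos hlim hη hρ hcomp
end

section
/- Let (y_k)_{k≥0} be a strictly decreasing sequence of positive real numbers converging to 0, let η > 1, and assume there exists ρ ≥ 1 with (1/ρ) · y_k^η ≤ y_k − y_{k+1} ≤ ρ · y_k^η for all k ≥ 0. Then there exists ρ' ≥ 1 such that (1/ρ') · k^{−1/(η−1)} ≤ y_k ≤ ρ' · k^{−1/(η−1)} for all k ≥ 1. -/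
open Filter Topology

/-- Bernoulli-derived tangent inequality: `q^(η-1) * (η p - (η-1) q) ≤ p^η`. -/
lemma aux_key_rpow {η p q : ℝ} (hη : 1 ≤ η) (hp : 0 < p) (hq : 0 < q) :
    q ^ (η - 1) * (η * p - (η - 1) * q) ≤ p ^ η := by
  have hx : 0 < p / q := div_pos hp hq
  have h1 := one_add_mul_self_le_rpow_one_add (s := p / q - 1) (by linarith) hη
  rw [show (1 : ℝ) + (p / q - 1) = p / q by ring] at h1
  rw [Real.div_rpow hp.le hq.le] at h1
  have hqη : 0 < q ^ η := Real.rpow_pos_of_pos hq _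
  rw [le_div_iff₀ hqη] at h1
  have e1 : q ^ (η - 1) * q = q ^ η := by
    rw [← Real.rpow_add_one hq.ne', sub_add_cancel]
  have e2 : (1 + η * (p / q - 1)) * q ^ η = q ^ (η - 1) * (η * p - (η - 1) * q) := by
    rw [← e1]; field_simp; ring
  linarith [e2 ▸ h1]

lemma aux_L {η a b : ℝ} (hη : 1 < η) (ha : 0 < a) (hab : a ≤ b) :
    (η - 1) * (b ^ η)⁻¹ * (b - a) ≤ a ^ (-(η - 1)) - b ^ (-(η - 1)) := by
  have hb : 0 < b := ha.trans_le hab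
  have key := aux_key_rpow (p := b) (q := a) hη.le hb ha
  have hA : 0 < a ^ (η - 1) := Real.rpow_pos_of_pos ha _
  have hB : 0 < b ^ (η - 1) := Real.rpow_pos_of_pos hb _
  have hE : 0 < b ^ η := Real.rpow_pos_of_pos hb _
  have eE : b ^ (η - 1) * b = b ^ η := by
    rw [← Real.rpow_add_one hb.ne', sub_add_cancel]
  rw [Real.rpow_neg ha.le, Real.rpow_neg hb.le,
    inv_sub_inv hA.ne' hB.ne',
    show (η - 1) * (b ^ η)⁻¹ * (b - a) = (η - 1) * (b - a) / (b ^ η) by ring,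
    div_le_div_iff₀ hE (mul_pos hA hB)]
  nlinarith [mul_le_mul_of_nonneg_left key hB.le, hA.le, hB.le, hab, sub_nonneg.2 hab]

lemma aux_U {η a b : ℝ} (hη : 1 < η) (ha : 0 < a) (hab : a ≤ b) :
    a ^ (-(η - 1)) - b ^ (-(η - 1)) ≤ (η - 1) * (a ^ η)⁻¹ * (b - a) := by
  have hb : 0 < b := ha.trans_le hab
  have key := aux_key_rpow (p := a) (q := b) hη.le ha hb
  have hA : 0 < a ^ (η - 1) := Real.rpow_pos_of_pos ha _
  have hB : 0 < b ^ (η - 1) := Real.rpow_pos_of_pos hb _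
  have hF : 0 < a ^ η := Real.rpow_pos_of_pos ha _
  have eF : a ^ (η - 1) * a = a ^ η := by
    rw [← Real.rpow_add_one ha.ne', sub_add_cancel]
  rw [Real.rpow_neg ha.le, Real.rpow_neg hb.le,
    inv_sub_inv hA.ne' hB.ne',
    show (η - 1) * (a ^ η)⁻¹ * (b - a) = (η - 1) * (b - a) / (a ^ η) by ring,
    div_le_div_iff₀ (mul_pos hA hB) hF]
  nlinarith [mul_le_mul_of_nonneg_left key hA.le, hA.le, hB.le, sub_nonneg.2 hab]

/-- turn a lower bound on `x ^ (-c)` into an upper bound on `x` -/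
lemma aux_bound1 {x m c : ℝ} (hx : 0 < x) (hc : 0 < c) (hm : 0 < m)
    (h : m ≤ x ^ (-c)) : x ≤ m ^ (-(1 / c)) := by
  have e : (x ^ (-c)) ^ (-(1 / c)) = x := by
    rw [← Real.rpow_mul hx.le, show -c * -(1/c) = 1 by field_simp, Real.rpow_one]
  calc x = (x ^ (-c)) ^ (-(1 / c)) := e.symm
    _ ≤ m ^ (-(1 / c)) := Real.rpow_le_rpow_of_nonpos hm h (neg_nonpos.2 (by positivity))

/-- turn an upper bound on `x ^ (-c)` into a lower bound on `x` -/
lemma aux_bound2 {x M c : ℝ} (hx : 0 < x) (hc : 0 < c)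
    (h : x ^ (-c) ≤ M) : M ^ (-(1 / c)) ≤ x := by
  have hx' : 0 < x ^ (-c) := Real.rpow_pos_of_pos hx _
  have e : (x ^ (-c)) ^ (-(1 / c)) = x := by
    rw [← Real.rpow_mul hx.le, show -c * -(1/c) = 1 by field_simp, Real.rpow_one]
  calc M ^ (-(1 / c)) ≤ (x ^ (-c)) ^ (-(1 / c)) :=
        Real.rpow_le_rpow_of_nonpos hx' h (neg_nonpos.2 (by positivity))
    _ = x := e

/-- If `y_k − y_{k+1} ≍ y_k^η` with `η > 1`, then `y_k ≍ k^{−1/(η−1)}`. -/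
theorem sequence_comparable_with_power
    (ys : ℕ → ℝ) (η ρ : ℝ)
    (hpos : ∀ k, 0 < ys k) (hanti : StrictAnti ys)
    (hlim : Filter.Tendsto ys Filter.atTop (nhds 0))
    (hη : 1 < η) (hρ : 1 ≤ ρ)
    (hcomp : ∀ k : ℕ,
      (1/ρ) * ys k ^ η ≤ ys k - ys (k+1) ∧
      ys k - ys (k+1) ≤ ρ * ys k ^ η) :
    ∃ ρ' : ℝ, 1 ≤ ρ' ∧ ∀ k : ℕ, 1 ≤ k →
      (1/ρ') * (k : ℝ) ^ (-(1 / (η - 1))) ≤ ys k ∧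
      ys k ≤ ρ' * (k : ℝ) ^ (-(1 / (η - 1))) := by
  have hc0 : 0 < η - 1 := by linarith
  have hρ0 : 0 < ρ := lt_of_lt_of_le one_pos hρ
  -- lower bound on increments of B k := ys k ^ (-(η-1))
  have hstep_lo : ∀ k : ℕ, (η - 1) / ρ ≤ ys (k+1) ^ (-(η-1)) - ys k ^ (-(η-1)) := by
    intro k
    have hL := aux_L hη (hpos (k+1)) (hanti (Nat.lt_succ_self k)).le
    have h1 := (hcomp k).1
    have hE : (0:ℝ) < ys k ^ η := Real.rpow_pos_of_pos (hpos k) _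
    have h2 : (η - 1) / ρ ≤ (η - 1) * (ys k ^ η)⁻¹ * (ys k - ys (k+1)) := by
      calc (η - 1) / ρ = (η - 1) * (ys k ^ η)⁻¹ * ((1/ρ) * ys k ^ η) := by
            field_simp
        _ ≤ _ := by
            apply mul_le_mul_of_nonneg_left h1 (by positivity)
    linarith
  -- get N with ρ * ys k ^ (η-1) < 1/2 for k ≥ N
  have hcont : ContinuousAt (fun x : ℝ => x ^ (η - 1)) 0 :=
    Real.continuousAt_rpow_const 0 (η - 1) (Or.inr hc0.le)
  have hlim2 : Filter.Tendsto (fun k => ρ * ys k ^ (η - 1)) atTop (nhds 0) := by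
    have h := (hcont.tendsto.comp hlim)
    rw [Real.zero_rpow hc0.ne'] at h
    simpa using h.const_mul ρ
  obtain ⟨N, hN⟩ := (hlim2.eventually_lt_const (show (0:ℝ) < 1/2 by norm_num)).exists_forall_of_atTop
  -- upper bound on increments for k ≥ N
  have hsplit : ∀ x : ℝ, 0 < x → x ^ η = x ^ (η - 1) * x := by
    intro x hx
    rw [← Real.rpow_add_one hx.ne', sub_add_cancel]
  have hhalf : ∀ k, N ≤ k → ys k ≤ 2 * ys (k+1) := by
    intro k hk
    have h2 := (hcomp k).2
    have h3 := hN k hk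
    have h4 : ys k - ys (k+1) ≤ ρ * ys k ^ (η-1) * ys k := by
      rw [mul_assoc, ← hsplit _ (hpos k)]; exact h2
    nlinarith [hpos k, hpos (k+1), mul_le_mul_of_nonneg_right h3.le (hpos k).le]
  have hstep_hi : ∀ k : ℕ, N ≤ k →
      ys (k+1) ^ (-(η-1)) - ys k ^ (-(η-1)) ≤ (η - 1) * ρ * 2 ^ η := by
    intro k hk
    have hU := aux_U hη (hpos (k+1)) (hanti (Nat.lt_succ_self k)).le
    have h2 := (hcomp k).2
    have ha : 0 < ys (k+1) := hpos (k+1)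
    have hb : 0 < ys k := hpos k
    have hF : (0:ℝ) < ys (k+1) ^ η := Real.rpow_pos_of_pos ha _
    have hdivle : ys k / ys (k+1) ≤ 2 := by
      rw [div_le_iff₀ ha]; linarith [hhalf k hk]
    have hratio : (ys k / ys (k+1)) ^ η ≤ (2:ℝ) ^ η :=
      Real.rpow_le_rpow (by positivity) hdivle (by linarith)
    have hmul : (ys (k+1) ^ η)⁻¹ * ys k ^ η = (ys k / ys (k+1)) ^ η := by
      rw [Real.div_rpow hb.le ha.le]; ring
    calc ys (k+1) ^ (-(η-1)) - ys k ^ (-(η-1))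
        ≤ (η - 1) * (ys (k+1) ^ η)⁻¹ * (ys k - ys (k+1)) := hU
      _ ≤ (η - 1) * (ys (k+1) ^ η)⁻¹ * (ρ * ys k ^ η) :=
          mul_le_mul_of_nonneg_left h2 (by positivity)
      _ = (η - 1) * ρ * ((ys (k+1) ^ η)⁻¹ * ys k ^ η) := by ring
      _ = (η - 1) * ρ * (ys k / ys (k+1)) ^ η := by rw [hmul]
      _ ≤ (η - 1) * ρ * 2 ^ η := by
          apply mul_le_mul_of_nonneg_left hratio (by positivity)
  -- summed bounds
  have hlow : ∀ k : ℕ, (k : ℝ) * ((η - 1) / ρ) ≤ ys k ^ (-(η-1)) := by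
    intro k
    induction k with
    | zero => simpa using (Real.rpow_pos_of_pos (hpos 0) (-(η-1))).le
    | succ n ih =>
        have := hstep_lo n
        push_cast
        linarith
  set C : ℝ := (η - 1) * ρ * 2 ^ η with hC
  have hCpos : 0 < C := by
    have : (0:ℝ) < (2:ℝ) ^ η := Real.rpow_pos_of_pos (by norm_num) _
    positivity
  have hup : ∀ n : ℕ, ys (N + n) ^ (-(η-1)) ≤ ys N ^ (-(η-1)) + n * C := by
    intro n
    induction n with
    | zero => simp
    | succ m ih =>
        have := hstep_hi (N + m) (Nat.le_add_right N m)
        push_cast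
        rw [show N + (m + 1) = (N + m) + 1 by ring]
        push_cast
        linarith
  set D : ℝ := ys N ^ (-(η-1)) + C with hD
  have hBN : 0 < ys N ^ (-(η-1)) := Real.rpow_pos_of_pos (hpos N) _
  have hDpos : 0 < D := by positivity
  have hupper' : ∀ k : ℕ, N ≤ k → 1 ≤ k → ys k ^ (-(η-1)) ≤ (k : ℝ) * D := by
    intro k hk hk1
    obtain ⟨n, rfl⟩ := Nat.exists_eq_add_of_le hk
    have h := hup n
    have h1 : (1:ℝ) ≤ (N:ℝ) + (n:ℝ) := by exact_mod_cast hk1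
    have h2 : (n:ℝ) ≤ (N:ℝ) + (n:ℝ) := le_add_of_nonneg_left (Nat.cast_nonneg N)
    push_cast
    nlinarith [hBN, hCpos]
  -- convert to bounds on ys
  have hupbd : ∀ k : ℕ, 1 ≤ k →
      ys k ≤ ((η - 1) / ρ) ^ (-(1/(η-1))) * (k : ℝ) ^ (-(1/(η-1))) := by
    intro k hk
    have hk0 : (0:ℝ) < (k:ℝ) := by exact_mod_cast hk
    have hm : (0:ℝ) < (k:ℝ) * ((η - 1)/ρ) := by positivity
    have h := aux_bound1 (hpos k) hc0 hm (hlow k)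
    calc ys k ≤ ((k:ℝ) * ((η - 1)/ρ)) ^ (-(1/(η-1))) := h
      _ = ((η - 1) / ρ) ^ (-(1/(η-1))) * (k : ℝ) ^ (-(1/(η-1))) := by
          rw [Real.mul_rpow hk0.le (by positivity)]; ring
  have hlobd : ∀ k : ℕ, N ≤ k → 1 ≤ k →
      D ^ (-(1/(η-1))) * (k : ℝ) ^ (-(1/(η-1))) ≤ ys k := by
    intro k hk hk1
    have hk0 : (0:ℝ) < (k:ℝ) := by exact_mod_cast hk1
    have h := aux_bound2 (hpos k) hc0 (hupper' k hk hk1)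
    calc D ^ (-(1/(η-1))) * (k : ℝ) ^ (-(1/(η-1)))
        = ((k:ℝ) * D) ^ (-(1/(η-1))) := by
          rw [Real.mul_rpow hk0.le hDpos.le]; ring
      _ ≤ ys k := h
  -- choose ρ'
  set P : ℝ := ((η - 1) / ρ) ^ (-(1/(η-1))) with hP
  set Q : ℝ := D ^ (1/(η-1)) with hQ
  have hQpos : 0 < Q := Real.rpow_pos_of_pos hDpos _
  refine ⟨max (max P Q) (max (1 / ys N) 1), ?_, ?_⟩
  · exact le_trans (le_max_right _ _) (le_max_right _ _)
  intro k hk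
  set ρ' : ℝ := max (max P Q) (max (1 / ys N) 1) with hρ'
  have hρ'1 : (1:ℝ) ≤ ρ' := le_trans (le_max_right _ _) (le_max_right _ _)
  have hρ'pos : 0 < ρ' := lt_of_lt_of_le one_pos hρ'1
  have hk0 : (0:ℝ) < (k:ℝ) := by exact_mod_cast hk
  have hkpow : (0:ℝ) < (k:ℝ) ^ (-(1/(η-1))) := Real.rpow_pos_of_pos hk0 _
  constructor
  · -- lower bound
    rcases le_or_gt N k with hNk | hNk
    · have h := hlobd k hNk hk
      have hQ' : 1 / ρ' ≤ D ^ (-(1/(η-1))) := by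
        rw [Real.rpow_neg hDpos.le, ← hQ]
        rw [one_div, inv_le_inv₀ hρ'pos hQpos]
        exact le_trans (le_max_right _ _) (le_max_left _ _)
      calc (1/ρ') * (k : ℝ) ^ (-(1/(η-1)))
          ≤ D ^ (-(1/(η-1))) * (k : ℝ) ^ (-(1/(η-1))) :=
            mul_le_mul_of_nonneg_right hQ' hkpow.le
        _ ≤ ys k := h
    · have h1 : (k:ℝ) ^ (-(1/(η-1))) ≤ 1 := by
        apply Real.rpow_le_one_of_one_le_of_nonpos
        · exact_mod_cast hk
        · exact neg_nonpos.2 (by positivity)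
      have h2 : 1 / ρ' ≤ ys N := by
        rw [div_le_iff₀ hρ'pos]
        have h3 : 1 / ys N ≤ ρ' := le_trans (le_max_left _ _) (le_max_right _ _)
        rw [div_le_iff₀ (hpos N)] at h3
        linarith
      have h4 : ys N ≤ ys k := hanti.antitone (Nat.le_of_lt hNk)
      calc (1/ρ') * (k : ℝ) ^ (-(1/(η-1)))
          ≤ (1/ρ') * 1 := mul_le_mul_of_nonneg_left h1 (by positivity)
        _ = 1/ρ' := mul_one _
        _ ≤ ys N := h2
        _ ≤ ys k := h4
  · -- upper bound
    have h := hupbd k hk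
    have hPle : P ≤ ρ' := le_trans (le_max_left _ _) (le_max_left _ _)
    calc ys k ≤ P * (k : ℝ) ^ (-(1/(η-1))) := h
      _ ≤ ρ' * (k : ℝ) ^ (-(1/(η-1))) := mul_le_mul_of_nonneg_right hPle hkpow.le
end

section
/- Let j ∈ ℕ₀ and let h be a C^∞ function on a neighborhood of 0 ∈ ℝ such that there exist c ≠ 0 and C, δ > 0 with |h(x) + h(−x) − c x^{2j}| ≤ C x^{2j+2} for all |x| < δ. Define Ψ(x) = x · √(1 − x h(x)) on a neighborhood of 0 where 1 − x h(x) > 0. Then there exist an even polynomial P of degree ≤ 2j with P(0) = 1, a constant α ≠ 0, and C', δ' > 0 such that |Ψ(x) − x P(x) − α x^{2j+2}| ≤ C' |x|^{2j+3} for all |x| < δ'. -/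
open Filter Topology
open Set Polynomial
set_option maxHeartbeats 1000000


private lemma eval_zero_eq_zero_of_small' (Q : Polynomial ℝ) (K δ : ℝ) (hδ : 0 < δ) (m : ℕ)
    (hb : ∀ x : ℝ, 0 < |x| → |x| < δ → |Q.eval x| ≤ K * |x| ^ (m+1)) : Q.eval 0 = 0 := by
  have h1 : Tendsto (fun x : ℝ => |Q.eval x|) (𝓝[≠] (0:ℝ)) (𝓝 |Q.eval 0|) :=
    ((Q.continuous.abs).tendsto 0).mono_left nhdsWithin_le_nhds
  have h2 : Tendsto (fun x : ℝ => K * |x| ^ (m+1)) (𝓝[≠] (0:ℝ)) (𝓝 0) := by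
    have h3 : Tendsto (fun x : ℝ => K * |x| ^ (m+1)) (𝓝 (0:ℝ)) (𝓝 (K * |(0:ℝ)| ^ (m+1))) :=
      (continuous_const.mul (continuous_abs.pow _)).tendsto 0
    simpa using h3.mono_left nhdsWithin_le_nhds
  have hev : ∀ᶠ x in 𝓝[≠] (0:ℝ), |Q.eval x| ≤ K * |x| ^ (m+1) := by
    filter_upwards [nhdsWithin_le_nhds (Ioo_mem_nhds (show -δ < (0:ℝ) by linarith) hδ),
      self_mem_nhdsWithin] with x hx hx0
    exact hb x (abs_pos.mpr hx0) (abs_lt.mpr ⟨hx.1, hx.2⟩)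
  have : |Q.eval 0| ≤ 0 := le_of_tendsto_of_tendsto h1 h2 hev
  have := le_antisymm this (abs_nonneg _)
  exact abs_eq_zero.mp this

private lemma poly_eq_zero_of_small' (n : ℕ) :
    ∀ (Q : Polynomial ℝ) (K δ : ℝ), 0 < δ → Q.natDegree ≤ n →
    (∀ x : ℝ, 0 < |x| → |x| < δ → |Q.eval x| ≤ K * |x| ^ (n+1)) → Q = 0 := by
  induction n with
  | zero =>
    intro Q K δ hδ hdeg hb
    have h0 : Q.coeff 0 = 0 := by
      rw [coeff_zero_eq_eval_zero]; exact eval_zero_eq_zero_of_small' Q K δ hδ 0 hb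
    rw [Polynomial.eq_C_of_natDegree_le_zero hdeg, h0, map_zero]
  | succ n ih =>
    intro Q K δ hδ hdeg hb
    have h0 : Q.coeff 0 = 0 := by
      rw [coeff_zero_eq_eval_zero]; exact eval_zero_eq_zero_of_small' Q K δ hδ _ hb
    have hQ : Q = X * Q.divX := by
      conv_lhs => rw [← Q.X_mul_divX_add]
      rw [h0, map_zero, add_zero]
    have hdeg' : Q.divX.natDegree ≤ n := by
      rw [natDegree_divX_eq_natDegree_tsub_one]; omega
    have hb' : ∀ x : ℝ, 0 < |x| → |x| < δ → |Q.divX.eval x| ≤ K * |x| ^ (n+1) := by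
      intro x hx hxδ
      have h1 := hb x hx hxδ
      rw [hQ, eval_mul, eval_X, abs_mul] at h1
      have h2 : |x| * |Q.divX.eval x| ≤ (K * |x| ^ (n+1)) * |x| := by
        calc |x| * |Q.divX.eval x| ≤ K * |x| ^ (n+1+1) := h1
        _ = (K * |x| ^ (n+1)) * |x| := by ring
      have h3 : |Q.divX.eval x| * |x| ≤ (K * |x| ^ (n+1)) * |x| := by
        rw [mul_comm]; exact h2
      exact le_of_mul_le_mul_right h3 hx
    have hz := ih Q.divX K δ hδ hdeg' hb'
    rw [hQ, hz, mul_zero]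


private lemma iterDW_eq {f : ℝ → ℝ} {u s : Set ℝ} {N : ℕ} (hu : IsOpen u)
    (hf : ContDiffOn ℝ N f u) (hs : UniqueDiffOn ℝ s) {x : ℝ} (hxs : x ∈ s) (hxu : x ∈ u)
    (i : ℕ) (hi : i ≤ N) :
    iteratedDerivWithin i f s x = iteratedDeriv i f x := by
  have H : HasFTaylorSeriesUpToOn N f (ftaylorSeriesWithin ℝ f u) u :=
    hf.ftaylorSeriesWithin hu.uniqueDiffOn
  have h2 : ftaylorSeriesWithin ℝ f u x i = iteratedFDerivWithin ℝ i f (s ∩ u) x :=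
    (H.mono inter_subset_right).eq_iteratedFDerivWithin_of_uniqueDiffOn (by exact_mod_cast hi)
      (hs.inter hu) ⟨hxs, hxu⟩
  have h1 : iteratedFDerivWithin ℝ i f (s ∩ u) x = iteratedFDerivWithin ℝ i f s x :=
    iteratedFDerivWithin_inter_open hu hxu
  have h4 : iteratedFDerivWithin ℝ i f u x = iteratedFDeriv ℝ i f x :=
    iteratedFDerivWithin_of_isOpen i hu hxu
  have key : iteratedFDerivWithin ℝ i f s x = iteratedFDeriv ℝ i f x := by
    rw [← h1, ← h2]; exact h4
  rw [iteratedDerivWithin_eq_iteratedFDerivWithin, iteratedDeriv_eq_iteratedFDeriv, key]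

private lemma taylor_bound' (f : ℝ → ℝ) (n : ℕ) {u : Set ℝ} (hu : IsOpen u) (h0 : (0:ℝ) ∈ u)
    (hf : ContDiffOn ℝ (n+1 : ℕ) f u) :
    ∃ K > (0:ℝ), ∃ ρ > (0:ℝ), ∀ x : ℝ, |x| ≤ ρ →
      |f x - ∑ i ∈ Finset.range (n+1), iteratedDeriv i f 0 / i.factorial * x ^ i|
        ≤ K * |x| ^ (n+1) := by
  obtain ⟨ε, hε, hball⟩ := Metric.isOpen_iff.mp hu 0 h0
  set ρ := ε/2 with hρdef
  have hρ : (0:ℝ) < ρ := by positivity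
  have hsub : Icc (-ρ) ρ ⊆ u := by
    intro y hy
    apply hball
    rw [Metric.mem_ball, Real.dist_eq, sub_zero]
    have := abs_le.mpr ⟨hy.1, hy.2⟩
    calc |y| ≤ ρ := this
    _ < ε := by rw [hρdef]; linarith
  have hIccP : Icc (0:ℝ) ρ ⊆ u := fun y hy => hsub ⟨by linarith [hy.1], hy.2⟩
  -- positive side
  have hf1 : ContDiffOn ℝ (n+1 : ℕ) f (Icc 0 ρ) := hf.mono hIccP
  obtain ⟨K₁, hK₁⟩ := exists_taylor_mean_remainder_bound hρ.le hf1
  have hT : ∀ x : ℝ, taylorWithinEval f n (Icc 0 ρ) 0 x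
      = ∑ i ∈ Finset.range (n+1), iteratedDeriv i f 0 / i.factorial * x ^ i := by
    intro x
    rw [taylor_within_apply]
    refine Finset.sum_congr rfl fun i hi => ?_
    rw [iterDW_eq hu hf (uniqueDiffOn_Icc hρ) (left_mem_Icc.mpr hρ.le) h0 i
      (by simp at hi; omega)]
    rw [smul_eq_mul, sub_zero]
    ring
  -- negative side
  set g : ℝ → ℝ := fun y => f (-y) with hgdef
  set v : Set ℝ := (fun y : ℝ => -y) ⁻¹' u with hvdef
  have hv : IsOpen v := hu.preimage continuous_neg
  have h0v : (0:ℝ) ∈ v := by simp [hvdef]; simpa using h0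
  have hg : ContDiffOn ℝ (n+1 : ℕ) g v :=
    hf.comp (contDiff_neg.contDiffOn) (fun y hy => hy)
  have hIccN : Icc (0:ℝ) ρ ⊆ v := by
    intro y hy
    simp only [hvdef, mem_preimage]
    exact hsub ⟨by linarith [hy.2], by linarith [hy.1]⟩
  have hg1 : ContDiffOn ℝ (n+1 : ℕ) g (Icc 0 ρ) := hg.mono hIccN
  obtain ⟨K₂, hK₂⟩ := exists_taylor_mean_remainder_bound hρ.le hg1
  have hdg : ∀ i : ℕ, iteratedDeriv i g 0 = (-1 : ℝ)^i * iteratedDeriv i f 0 := by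
    intro i
    have := iteratedDeriv_comp_neg i f 0
    rw [hgdef]
    simpa [smul_eq_mul] using this
  have hTg : ∀ y : ℝ, taylorWithinEval g n (Icc 0 ρ) 0 y
      = ∑ i ∈ Finset.range (n+1), (-1:ℝ)^i * iteratedDeriv i f 0 / i.factorial * y ^ i := by
    intro y
    rw [taylor_within_apply]
    refine Finset.sum_congr rfl fun i hi => ?_
    rw [iterDW_eq hv hg (uniqueDiffOn_Icc hρ) (left_mem_Icc.mpr hρ.le) h0v i
      (by simp at hi; omega), hdg i]
    rw [smul_eq_mul, sub_zero]
    ring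
  refine ⟨max (max K₁ K₂) 1, by positivity, ρ, hρ, fun x hx => ?_⟩
  rcases le_or_gt 0 x with hx0 | hx0
  · have hmem : x ∈ Icc (0:ℝ) ρ := ⟨hx0, by rwa [abs_of_nonneg hx0] at hx⟩
    have := hK₁ x hmem
    rw [hT x, sub_zero] at this
    calc |f x - ∑ i ∈ Finset.range (n+1), iteratedDeriv i f 0 / i.factorial * x ^ i|
        ≤ K₁ * x ^ (n+1) := this
      _ = K₁ * |x| ^ (n+1) := by rw [abs_of_nonneg hx0]
      _ ≤ max (max K₁ K₂) 1 * |x| ^ (n+1) := by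
          apply mul_le_mul_of_nonneg_right _ (by positivity)
          exact le_max_of_le_left (le_max_left _ _)
  · set y := -x with hydef
    have hy0 : 0 ≤ y := by rw [hydef]; linarith
    have hmem : y ∈ Icc (0:ℝ) ρ := ⟨hy0, by rw [hydef]; rwa [abs_of_neg hx0] at hx⟩
    have hb := hK₂ y hmem
    rw [hTg y, sub_zero] at hb
    have hgx : g y = f x := by rw [hgdef]; simp [hydef]
    have hsum : ∑ i ∈ Finset.range (n+1), (-1:ℝ)^i * iteratedDeriv i f 0 / i.factorial * y ^ i
        = ∑ i ∈ Finset.range (n+1), iteratedDeriv i f 0 / i.factorial * x ^ i := by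
      refine Finset.sum_congr rfl fun i _ => ?_
      rw [hydef]
      rw [show ((-x) : ℝ)^i = (-1:ℝ)^i * x^i by rw [neg_pow]]
      ring_nf
      rw [mul_comm i 2, pow_mul, neg_one_sq, one_pow, mul_one]
    rw [hgx, hsum] at hb
    calc |f x - ∑ i ∈ Finset.range (n+1), iteratedDeriv i f 0 / i.factorial * x ^ i|
        ≤ K₂ * y ^ (n+1) := hb
      _ = K₂ * |x| ^ (n+1) := by rw [hydef, abs_of_neg hx0]
      _ ≤ max (max K₁ K₂) 1 * |x| ^ (n+1) := by
          apply mul_le_mul_of_nonneg_right _ (by positivity)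
          exact le_max_of_le_left (le_max_right _ _)


/-- If the even part of `h` has leading term `c x^{2j}` with `c ≠ 0`, then
`Ψ(x) = x √(1 − x h(x))` has an expansion `x P(x) + α x^{2j+2} + O(x^{2j+3})`
with `P` an even polynomial of degree `≤ 2j`, `P(0) = 1` and `α ≠ 0`. -/
theorem psi_expansion_of_even_part
    (j : ℕ) (h : ℝ → ℝ)
    (hh : ∃ r > (0:ℝ), ContDiffOn ℝ (⊤ : ℕ∞) h (Set.Ioo (-r) r))
    (c C δ : ℝ) (hc : c ≠ 0) (hC : 0 < C) (hδ : 0 < δ)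
    (heven : ∀ x : ℝ, |x| < δ →
      |h x + h (-x) - c * x ^ (2*j)| ≤ C * x ^ (2*j+2)) :
    ∃ P : Polynomial ℝ,
      P.natDegree ≤ 2*j ∧ (∀ i : ℕ, Odd i → P.coeff i = 0) ∧
      P.eval 0 = 1 ∧
      ∃ α : ℝ, α ≠ 0 ∧ ∃ C' > (0:ℝ), ∃ δ' > (0:ℝ), ∀ x : ℝ, |x| < δ' →
        |x * Real.sqrt (1 - x * h x) - x * P.eval x - α * x ^ (2*j+2)| ≤
          C' * |x| ^ (2*j+3) := by
  classical
  obtain ⟨r, hr, hhr⟩ := hh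
  -- bound for h near 0
  obtain ⟨M, hM1, hM⟩ : ∃ M : ℝ, 1 ≤ M ∧ ∀ x ∈ Icc (-(r/2)) (r/2), |h x| ≤ M := by
    have hcont : ContinuousOn h (Icc (-(r/2)) (r/2)) :=
      (hhr.continuousOn).mono (fun y hy => ⟨by simp at hy ⊢; linarith [hy.1],
        by simp at hy ⊢; linarith [hy.2]⟩)
    obtain ⟨M0, hM0⟩ := (isCompact_Icc).exists_bound_of_continuousOn hcont
    exact ⟨max M0 1, le_max_right _ _, fun x hx => by
      have := hM0 x hx
      rw [Real.norm_eq_abs] at this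
      exact this.trans (le_max_left _ _)⟩
  have hM0 : (0:ℝ) < M := lt_of_lt_of_le one_pos hM1
  set ρ₀ : ℝ := min (r/2) (1/(2*M)) with hρ₀def
  have hρ₀ : (0:ℝ) < ρ₀ := lt_min (by linarith) (by positivity)
  have habs_h : ∀ x : ℝ, |x| ≤ ρ₀ → |h x| ≤ M := by
    intro x hx
    apply hM
    have : |x| ≤ r/2 := hx.trans (min_le_left _ _)
    exact abs_le.mp this
  have hbound : ∀ x : ℝ, |x| ≤ ρ₀ → |x * h x| ≤ 1/2 := by
    intro x hx
    have h1 : |x| * |h x| ≤ (1/(2*M)) * M := by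
      apply mul_le_mul (hx.trans (min_le_right _ _)) (habs_h x hx) (abs_nonneg _)
      positivity
    rw [abs_mul]
    calc |x| * |h x| ≤ (1/(2*M)) * M := h1
      _ = 1/2 := by field_simp
  have hpos : ∀ x : ℝ, |x| ≤ ρ₀ → (1:ℝ)/2 ≤ 1 - x * h x := by
    intro x hx
    have := abs_le.mp (hbound x hx)
    linarith [this.1, this.2]
  -- f and its smoothness
  set f : ℝ → ℝ := fun x => Real.sqrt (1 - x * h x) with hfdef
  set u : Set ℝ := Ioo (-ρ₀) ρ₀ with hudef
  have hu : IsOpen u := isOpen_Ioo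
  have h0u : (0:ℝ) ∈ u := by constructor <;> simp [hρ₀] <;> linarith
  have husub : u ⊆ Ioo (-r) r := by
    intro y hy
    have h1 : ρ₀ ≤ r/2 := min_le_left _ _
    exact ⟨by have := hy.1; linarith, by have := hy.2; linarith⟩
  have hhN : ContDiffOn ℝ ((2*j+2 : ℕ) : ℕ∞) h (Ioo (-r) r) := hhr.of_le (by exact_mod_cast le_top)
  have hfC : ContDiffOn ℝ ((2*j+2 : ℕ) : ℕ∞) f u := by
    intro x hx
    have hxρ : |x| ≤ ρ₀ := le_of_lt (abs_lt.mpr ⟨hx.1, hx.2⟩)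
    have h1 : ContDiffWithinAt ℝ ((2*j+2 : ℕ) : ℕ∞) (fun x : ℝ => 1 - x * h x) u x :=
      contDiffWithinAt_const.sub (contDiffWithinAt_id.mul ((hhN.mono husub) x hx))
    have h2 : (1:ℝ)/2 ≤ 1 - x * h x := hpos x hxρ
    have h3 : (1 - x * h x) ≠ 0 := by linarith
    exact (Real.contDiffAt_sqrt h3).comp_contDiffWithinAt x h1
  -- Taylor expansion of f at 0
  obtain ⟨K, hK, ρ₁, hρ₁, hKb⟩ := taylor_bound' f (2*j+1) hu h0u (by exact_mod_cast hfC)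
  simp only [show 2*j+1+1 = 2*j+2 from by omega] at hKb
  set d : ℕ → ℝ := fun i => iteratedDeriv i f 0 / i.factorial with hddef
  set T : Polynomial ℝ := ∑ i ∈ Finset.range (2*j+2), Polynomial.C (d i) * Polynomial.X ^ i
    with hTdef
  have hTeval : ∀ x : ℝ, T.eval x = ∑ i ∈ Finset.range (2*j+2), d i * x ^ i := by
    intro x; rw [hTdef, eval_finset_sum]; simp
  have hTcoeff : ∀ k : ℕ, T.coeff k = if k < 2*j+2 then d k else 0 := by
    intro k
    rw [hTdef, finset_sum_coeff]
    simp only [coeff_C_mul, coeff_X_pow, mul_ite, mul_one, mul_zero]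
    rw [Finset.sum_ite_eq (Finset.range (2*j+2)) k d]
    simp [Finset.mem_range]
  set T₂ : Polynomial ℝ := ∑ i ∈ Finset.range (2*j+2),
      Polynomial.C ((-1:ℝ)^i * d i) * Polynomial.X ^ i with hT₂def
  have hT₂eval : ∀ x : ℝ, T₂.eval x = T.eval (-x) := by
    intro x
    rw [hT₂def, eval_finset_sum, hTeval (-x)]
    simp only [eval_mul, eval_C, eval_pow, eval_X]
    refine Finset.sum_congr rfl fun i _ => ?_
    rw [neg_pow]
    ring
  have hT₂coeff : ∀ k : ℕ, T₂.coeff k = if k < 2*j+2 then (-1:ℝ)^k * d k else 0 := by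
    intro k
    rw [hT₂def, finset_sum_coeff]
    simp only [coeff_C_mul, coeff_X_pow, mul_ite, mul_one, mul_zero]
    rw [Finset.sum_ite_eq (Finset.range (2*j+2)) k (fun i => (-1:ℝ)^i * d i)]
    simp [Finset.mem_range]
  -- the small radius
  set δ₂ : ℝ := min (min ρ₁ ρ₀) (min δ 1) with hδ₂def
  have hδ₂ : (0:ℝ) < δ₂ := lt_min (lt_min hρ₁ hρ₀) (lt_min hδ one_pos)
  -- pointwise facts
  have hsq : ∀ x : ℝ, |x| ≤ ρ₀ → (f x) ^ 2 = 1 - x * h x := by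
    intro x hx
    exact Real.sq_sqrt (by linarith [hpos x hx])
  have hfge : ∀ x : ℝ, |x| ≤ ρ₀ → (1:ℝ)/2 ≤ f x := by
    intro x hx
    have h2 := hpos x hx
    rw [hfdef]
    rw [show (1:ℝ)/2 = Real.sqrt (1/4) by
      rw [show (1:ℝ)/4 = (1/2)^2 by norm_num, Real.sqrt_sq (by norm_num)]]
    exact Real.sqrt_le_sqrt (by linarith)
  have hf1 : ∀ x : ℝ, |x| ≤ ρ₀ → |f x - 1| ≤ M * |x| := by
    intro x hx
    have h1 : (f x - 1) * (f x + 1) = -(x * h x) := by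
      have := hsq x hx; nlinarith [this]
    have h2 : (1:ℝ) ≤ |f x + 1| := by
      have := hfge x hx
      rw [abs_of_nonneg (by linarith)]
      linarith
    calc |f x - 1| ≤ |f x - 1| * |f x + 1| := le_mul_of_one_le_right (abs_nonneg _) h2
      _ = |x * h x| := by rw [← abs_mul, h1, abs_neg]
      _ = |x| * |h x| := abs_mul _ _
      _ ≤ |x| * M := mul_le_mul_of_nonneg_left (habs_h x hx) (abs_nonneg _)
      _ = M * |x| := mul_comm _ _
  -- the odd-part estimate
  have hD : ∀ x : ℝ, |x| < δ₂ →
      |(f x - f (-x)) + (c/2) * x^(2*j+1)| ≤ (C + |c| * M) * |x|^(2*j+2) := by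
    intro x hx
    have hxρ₀ : |x| ≤ ρ₀ := le_of_lt (lt_of_lt_of_le hx ((min_le_left _ _).trans (min_le_right _ _)))
    have hxρ₀' : |(-x)| ≤ ρ₀ := by rwa [abs_neg]
    have hxδ : |x| < δ := lt_of_lt_of_le hx ((min_le_right _ _).trans (min_le_left _ _))
    have hx1 : |x| ≤ 1 := le_of_lt (lt_of_lt_of_le hx ((min_le_right _ _).trans (min_le_right _ _)))
    set a := f x with hadef
    set b := f (-x) with hbdef
    have hsa : a^2 = 1 - x * h x := hsq x hxρ₀
    have hsb : b^2 = 1 + x * h (-x) := by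
      have := hsq (-x) hxρ₀'
      rw [← hbdef] at this
      rw [this]; ring
    have hage : (1:ℝ)/2 ≤ a := hfge x hxρ₀
    have hbge : (1:ℝ)/2 ≤ b := hfge (-x) hxρ₀'
    have hS1 : (1:ℝ) ≤ a + b := by linarith
    have hS2 : |a + b - 2| ≤ 2*M*|x| := by
      have h1 := hf1 x hxρ₀
      have h2 := hf1 (-x) hxρ₀'
      rw [abs_neg] at h2
      calc |a + b - 2| = |(a - 1) + (b - 1)| := by ring_nf
        _ ≤ |a - 1| + |b - 1| := abs_add_le _ _
        _ ≤ M*|x| + M*|x| := add_le_add h1 h2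
        _ = 2*M*|x| := by ring
    set E : ℝ := h x + h (-x) - c * x ^ (2*j) with hEdef
    have hE : |E| ≤ C * |x|^(2*j+2) := by
      have := heven x hxδ
      rwa [show x^(2*j+2) = |x|^(2*j+2) by
        rw [pow_abs, abs_of_nonneg (by rw [show 2*j+2 = (j+1)*2 by ring, pow_mul]; positivity)]]
        at this
    have hDS : (a - b) * (a + b) = -(x * (h x + h (-x))) := by
      linear_combination hsa - hsb
    have hid : ((a - b) + (c/2) * x^(2*j+1)) * (a + b)
        = -x*E + (c/2)*x^(2*j+1)*((a+b)-2) := by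
      rw [hEdef]
      linear_combination hDS
    have h1 : |(a - b) + (c/2) * x^(2*j+1)| ≤ |((a - b) + (c/2) * x^(2*j+1)) * (a+b)| := by
      rw [abs_mul]
      exact le_mul_of_one_le_right (abs_nonneg _)
        (by rw [abs_of_nonneg (by linarith)]; exact hS1)
    have h2 : |(-x*E + (c/2)*x^(2*j+1)*((a+b)-2))|
        ≤ |x| * (C * |x|^(2*j+2)) + (|c|/2) * |x|^(2*j+1) * (2*M*|x|) := by
      calc |(-x*E + (c/2)*x^(2*j+1)*((a+b)-2))|
          ≤ |(-x)*E| + |(c/2)*x^(2*j+1)*((a+b)-2)| := abs_add_le _ _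
        _ = |x| * |E| + (|c|/2) * |x|^(2*j+1) * |(a+b)-2| := by
            rw [abs_mul, abs_neg, abs_mul, abs_mul, abs_pow, abs_div]
            norm_num
        _ ≤ |x| * (C * |x|^(2*j+2)) + (|c|/2) * |x|^(2*j+1) * (2*M*|x|) := by
            gcongr
            all_goals first | exact hE | exact hS2
    calc |(a - b) + (c/2) * x^(2*j+1)|
        ≤ |(-x*E + (c/2)*x^(2*j+1)*((a+b)-2))| := by rw [← hid]; exact h1
      _ ≤ |x| * (C * |x|^(2*j+2)) + (|c|/2) * |x|^(2*j+1) * (2*M*|x|) := h2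
      _ = C * (|x|^(2*j+2) * |x|) + |c| * M*|x|^(2*j+2) := by ring
      _ ≤ C * (|x|^(2*j+2) * 1) + |c| * M*|x|^(2*j+2) := by
          gcongr
      _ = (C + |c| * M) * |x|^(2*j+2) := by ring
  -- the odd-part polynomial is zero
  set R : Polynomial ℝ := T - T₂ + Polynomial.C (c/2) * Polynomial.X^(2*j+1) with hRdef
  have hReval : ∀ x : ℝ, R.eval x = T.eval x - T.eval (-x) + (c/2) * x^(2*j+1) := by
    intro x
    rw [hRdef]
    simp [hT₂eval x]
  have hRdeg : R.natDegree ≤ 2*j+1 := by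
    rw [Polynomial.natDegree_le_iff_coeff_eq_zero]
    intro m hm
    rw [hRdef]
    rw [coeff_add, coeff_sub, hTcoeff, hT₂coeff, coeff_C_mul, coeff_X_pow]
    rw [if_neg (by omega), if_neg (by omega), if_neg (by omega)]
    ring
  have hRzero : R = 0 := by
    apply poly_eq_zero_of_small' (2*j+1) R (2*K + (C + |c| * M)) δ₂ hδ₂ hRdeg
    intro x hx0 hxδ₂
    have hxρ₁ : |x| ≤ ρ₁ := le_of_lt (lt_of_lt_of_le hxδ₂ ((min_le_left _ _).trans (min_le_left _ _)))
    have hxρ₁' : |(-x)| ≤ ρ₁ := by rwa [abs_neg]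
    have h1 := hKb x hxρ₁
    have h2 := hKb (-x) hxρ₁'
    rw [abs_neg] at h2
    have h3 := hD x hxδ₂
    rw [hReval x]
    rw [← hTeval x] at h1
    rw [← hTeval (-x)] at h2
    have key : T.eval x - T.eval (-x) + (c/2) * x^(2*j+1)
        = -(f x - T.eval x) + (f (-x) - T.eval (-x)) + ((f x - f (-x)) + (c/2) * x^(2*j+1)) := by
      ring
    rw [key]
    rw [show 2*j+1+1 = 2*j+2 from by omega]
    calc |(-(f x - T.eval x)) + (f (-x) - T.eval (-x)) + ((f x - f (-x)) + (c/2) * x^(2*j+1))|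
        ≤ |(-(f x - T.eval x)) + (f (-x) - T.eval (-x))| + |(f x - f (-x)) + (c/2) * x^(2*j+1)| :=
          abs_add_le _ _
      _ ≤ (|(-(f x - T.eval x))| + |f (-x) - T.eval (-x)|) + (C + |c| * M) * |x|^(2*j+2) :=
          add_le_add (abs_add_le _ _) h3
      _ ≤ (K * |x|^(2*j+2) + K * |x|^(2*j+2)) + (C + |c| * M) * |x|^(2*j+2) := by
          rw [abs_neg]
          exact add_le_add (add_le_add h1 h2) (le_refl _)
      _ = (2*K + (C + |c| * M)) * |x|^(2*j+2) := by ring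
  -- extract coefficient information
  have hRcoeff : ∀ i : ℕ, i < 2*j+2 → d i - (-1:ℝ)^i * d i
      + (if i = 2*j+1 then c/2 else 0) = 0 := by
    intro i hi
    have h0 : R.coeff i = 0 := by rw [hRzero]; simp
    rw [hRdef, coeff_add, coeff_sub, hTcoeff, hT₂coeff, coeff_C_mul, coeff_X_pow,
      if_pos hi, if_pos hi] at h0
    simpa [mul_ite, mul_one, mul_zero] using h0
  have hodd : ∀ i : ℕ, Odd i → i ≠ 2*j+1 → T.coeff i = 0 := by
    intro i hoi hne
    rcases lt_or_ge i (2*j+2) with hlt | hge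
    · have := hRcoeff i hlt
      rw [if_neg hne, hoi.neg_one_pow] at this
      have : 2 * d i = 0 := by linarith [this]
      have hdi : d i = 0 := by linarith
      rw [hTcoeff, if_pos hlt, hdi]
    · rw [hTcoeff, if_neg (by omega)]
  have hc4 : T.coeff (2*j+1) = -c/4 := by
    have := hRcoeff (2*j+1) (by omega)
    rw [if_pos rfl, (by exact ⟨j, by omega⟩ : Odd (2*j+1)).neg_one_pow] at this
    rw [hTcoeff, if_pos (by omega)]
    linarith [this]
  -- the polynomial P
  refine ⟨T.erase (2*j+1), ?_, ?_, ?_, -c/4, ?_, K, hK, δ₂, hδ₂, ?_⟩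
  · rw [Polynomial.natDegree_le_iff_coeff_eq_zero]
    intro m hm
    rw [Polynomial.coeff_erase]
    split
    · rfl
    · rw [hTcoeff, if_neg (by omega)]
  · intro i hoi
    rw [Polynomial.coeff_erase]
    split
    · rfl
    · next hne => exact hodd i hoi (fun hh => hne (by omega))
  · rw [← Polynomial.coeff_zero_eq_eval_zero, Polynomial.coeff_erase,
      if_neg (by omega), hTcoeff, if_pos (by omega)]
    rw [hddef]
    simp only [iteratedDeriv_zero, Nat.factorial_zero, Nat.cast_one, div_one]
    rw [hfdef]
    simp [Real.sqrt_one]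
  · exact div_ne_zero (neg_ne_zero.mpr hc) (by norm_num)
  · intro x hxδ₂
    have hxρ₁ : |x| ≤ ρ₁ := le_of_lt (lt_of_lt_of_le hxδ₂ ((min_le_left _ _).trans (min_le_left _ _)))
    have hfx : Real.sqrt (1 - x * h x) = f x := rfl
    have hPT : T.eval x = (T.erase (2*j+1)).eval x + (-c/4) * x^(2*j+1) := by
      conv_lhs => rw [← Polynomial.monomial_add_erase T (2*j+1)]
      rw [eval_add, eval_monomial, hc4]
      ring
    have hKx := hKb x hxρ₁
    rw [← hTeval x] at hKx
    have key : x * f x - x * (T.erase (2*j+1)).eval x - (-c/4) * x^(2*j+2)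
        = x * (f x - T.eval x) := by
      rw [hPT]; ring
    rw [hfx, key, abs_mul]
    calc |x| * |f x - T.eval x| ≤ |x| * (K * |x|^(2*j+2)) :=
        mul_le_mul_of_nonneg_left hKx (abs_nonneg _)
      _ = K * |x|^(2*j+3) := by ring
end

section
/- (Lagrange-inversion parity.) Let j ∈ ℕ₀ and let Ψ be a C^∞ function on a neighborhood of 0 ∈ ℝ such that there exist an even polynomial P of degree ≤ 2j with P(0) = 1, a constant α ≠ 0, and C, δ > 0 with |Ψ(x) − x P(x) − α x^{2j+2}| ≤ C |x|^{2j+3} for all |x| < δ. Let Φ be a C^∞ local inverse of Ψ at 0, i.e. Φ(Ψ(x)) = x for all x in a neighborhood of 0. Then there exist an even polynomial Q of degree ≤ 2j with Q(0) = 1, a constant β ≠ 0, and C', δ' > 0 such that |Φ(x) − x Q(x) − β x^{2j+2}| ≤ C' |x|^{2j+3} for all |x| < δ'. -/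
open Polynomial Finset Filter Topology


lemma coeff_comp_mul_X (D R : ℝ[X]) (i : ℕ) :
    (D.comp (X * R)).coeff i
      = ∑ k ∈ Finset.range (i+1), D.coeff k * (R^k).coeff (i-k) := by
  rw [Polynomial.comp, Polynomial.eval₂_eq_sum_range, Polynomial.finset_sum_coeff]
  have hterm : ∀ k : ℕ, (C (D.coeff k) * (X*R)^k).coeff i
      = if k ≤ i then D.coeff k * (R^k).coeff (i-k) else 0 := by
    intro k
    rw [Polynomial.coeff_C_mul, mul_pow, mul_comm (X^k), Polynomial.coeff_mul_X_pow']
    split_ifs with h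
    · rfl
    · simp
  simp only [hterm]
  set M := max (D.natDegree + 1) (i + 1) with hM
  have h1 : ∑ k ∈ Finset.range (D.natDegree + 1),
      (if k ≤ i then D.coeff k * (R^k).coeff (i-k) else 0)
      = ∑ k ∈ Finset.range M, (if k ≤ i then D.coeff k * (R^k).coeff (i-k) else 0) := by
    apply Finset.sum_subset (Finset.range_subset_range.2 (le_max_left _ _))
    intro k _ hk
    rw [Finset.mem_range, not_lt] at hk
    have : D.coeff k = 0 := D.coeff_eq_zero_of_natDegree_lt (by omega)
    simp [this]
  have h2 : ∑ k ∈ Finset.range (i + 1),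
      (if k ≤ i then D.coeff k * (R^k).coeff (i-k) else 0)
      = ∑ k ∈ Finset.range M, (if k ≤ i then D.coeff k * (R^k).coeff (i-k) else 0) := by
    apply Finset.sum_subset (Finset.range_subset_range.2 (le_max_right _ _))
    intro k _ hk
    rw [Finset.mem_range, not_lt] at hk
    rw [if_neg (by omega)]
  rw [h1, ← h2]
  apply Finset.sum_congr rfl
  intro k hk
  rw [Finset.mem_range] at hk
  rw [if_pos (by omega)]

lemma coeff_zero_of_comp_zero (R D : ℝ[X]) (hR : R.coeff 0 = 1) (n : ℕ)
    (h : ∀ i ≤ n, (D.comp (X * R)).coeff i = 0) :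
    ∀ i ≤ n, D.coeff i = 0 := by
  intro i
  induction i using Nat.strong_induction_on with
  | _ i ih =>
    intro hi
    have key := h i hi
    rw [coeff_comp_mul_X, Finset.sum_range_succ] at key
    have hR0 : (R^i).coeff 0 = 1 := by
      rw [Polynomial.coeff_zero_eq_eval_zero, Polynomial.eval_pow,
        ← Polynomial.coeff_zero_eq_eval_zero, hR, one_pow]
    have hz : ∑ k ∈ Finset.range i, D.coeff k * (R^k).coeff (i - k) = 0 := by
      apply Finset.sum_eq_zero
      intro k hk
      rw [Finset.mem_range] at hk
      rw [ih k hk (by omega), zero_mul]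
    rw [hz, zero_add, Nat.sub_self, hR0, mul_one] at key
    exact key

lemma exists_trunc_inv (R : ℝ[X]) (hR : R.coeff 0 = 1) :
    ∀ n : ℕ, ∃ G : ℝ[X], G.natDegree ≤ n ∧
      ∀ i ≤ n, (G.comp (X * R)).coeff i = (X : ℝ[X]).coeff i := by
  intro n
  induction n with
  | zero =>
    refine ⟨0, by simp, ?_⟩
    intro i hi
    interval_cases i
    simp
  | succ n ih =>
    obtain ⟨G, hdeg, hG⟩ := ih
    set c := (G.comp (X*R)).coeff (n+1) - (X:ℝ[X]).coeff (n+1) with hc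
    refine ⟨G - C c * X^(n+1), ?_, ?_⟩
    · apply le_trans (Polynomial.natDegree_sub_le _ _)
      simp only [max_le_iff]
      constructor
      · omega
      · exact le_trans (Polynomial.natDegree_C_mul_le _ _) (by simp)
    · intro i hi
      rw [Polynomial.sub_comp, Polynomial.mul_comp, Polynomial.C_comp,
        Polynomial.X_pow_comp, Polynomial.coeff_sub, Polynomial.coeff_C_mul,
        mul_pow, mul_comm ((X:ℝ[X])^(n+1)), Polynomial.coeff_mul_X_pow']
      rcases lt_or_eq_of_le hi with hlt | heq
      · rw [if_neg (by omega), mul_zero, sub_zero]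
        exact hG i (by omega)
      · subst heq
        rw [if_pos le_rfl, Nat.sub_self]
        have hR0 : (R^(n+1)).coeff 0 = 1 := by
          rw [Polynomial.coeff_zero_eq_eval_zero, Polynomial.eval_pow,
            ← Polynomial.coeff_zero_eq_eval_zero, hR, one_pow]
        rw [hR0, mul_one, hc]
        ring

lemma coeff_comp_neg_X (p : ℝ[X]) (i : ℕ) :
    (p.comp (-X)).coeff i = (-1)^i * p.coeff i := by
  have hX : (-X : ℝ[X]) = X * C (-1) := by
    rw [Polynomial.C_neg, Polynomial.C_1, mul_neg, mul_one]
  rw [hX, coeff_comp_mul_X, Finset.sum_eq_single i]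
  · rw [← Polynomial.C_pow, Polynomial.coeff_C, Nat.sub_self, if_pos rfl, mul_comm]
  · intro k hk hne
    rw [Finset.mem_range] at hk
    rw [← Polynomial.C_pow, Polynomial.coeff_C, if_neg (by omega), mul_zero]
  · intro h
    exact absurd (Finset.self_mem_range_succ i) h

lemma pow_diff_coeff (Pp : ℝ[X]) (α : ℝ) (m : ℕ) (hP0 : Pp.coeff 0 = 1) :
    ∀ k : ℕ, (∀ l ≤ m, ((Pp + C α * X^(m+1))^k - (Pp - C α * X^(m+1))^k).coeff l = 0)
      ∧ ((Pp + C α * X^(m+1))^k - (Pp - C α * X^(m+1))^k).coeff (m+1) = 2 * k * α := by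
  set R := Pp + C α * X^(m+1) with hR
  set Rb := Pp - C α * X^(m+1) with hRb
  have hXc : ∀ l : ℕ, (C α * X^(m+1) : ℝ[X]).coeff l = if l = m+1 then α else 0 := by
    intro l
    rw [Polynomial.coeff_C_mul, Polynomial.coeff_X_pow]
    split_ifs with h <;> simp
  have hR0 : R.coeff 0 = 1 := by
    rw [hR, Polynomial.coeff_add, hXc, if_neg (by omega), add_zero, hP0]
  have hRb0 : Rb.coeff 0 = 1 := by
    rw [hRb, Polynomial.coeff_sub, hXc, if_neg (by omega), sub_zero, hP0]
  have hRbk0 : ∀ k : ℕ, (Rb^k).coeff 0 = 1 := by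
    intro k
    rw [Polynomial.coeff_zero_eq_eval_zero, Polynomial.eval_pow,
      ← Polynomial.coeff_zero_eq_eval_zero, hRb0, one_pow]
  have hdiff : ∀ l : ℕ, (R - Rb).coeff l = if l = m+1 then 2*α else 0 := by
    intro l
    have : R - Rb = C α * X^(m+1) + C α * X^(m+1) := by rw [hR, hRb]; ring
    rw [this, Polynomial.coeff_add, hXc]
    split_ifs <;> ring
  intro k
  induction k with
  | zero => simp
  | succ k ih =>
    obtain ⟨ihlow, ihtop⟩ := ih
    have hsplit : R^(k+1) - Rb^(k+1) = R * (R^k - Rb^k) + (R - Rb) * Rb^k := by ring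
    have hterm1_low : ∀ l ≤ m, (R * (R^k - Rb^k)).coeff l = 0 := by
      intro l hl
      rw [Polynomial.coeff_mul]
      apply Finset.sum_eq_zero
      intro p hp
      rw [Finset.HasAntidiagonal.mem_antidiagonal] at hp
      rw [ihlow p.2 (by omega), mul_zero]
    have hterm2_low : ∀ l ≤ m, ((R - Rb) * Rb^k).coeff l = 0 := by
      intro l hl
      rw [Polynomial.coeff_mul]
      apply Finset.sum_eq_zero
      intro p hp
      rw [Finset.HasAntidiagonal.mem_antidiagonal] at hp
      rw [hdiff p.1, if_neg (by omega), zero_mul]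
    have hterm1_top : (R * (R^k - Rb^k)).coeff (m+1) = 2 * k * α := by
      rw [Polynomial.coeff_mul]
      rw [Finset.sum_eq_single (0, m+1)]
      · rw [hR0, ihtop, one_mul]
      · intro p hp hne
        rw [Finset.HasAntidiagonal.mem_antidiagonal] at hp
        have hp2 : p.2 ≤ m := by
          rcases Nat.lt_or_ge p.2 (m+1) with h | h
          · omega
          · exfalso; apply hne
            have : p.2 = m+1 := by omega
            have : p.1 = 0 := by omega
            exact Prod.ext this ‹p.2 = m+1›
        rw [ihlow p.2 hp2, mul_zero]
      · intro h
        exfalso; apply h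
        rw [Finset.HasAntidiagonal.mem_antidiagonal]
        simp
    have hterm2_top : ((R - Rb) * Rb^k).coeff (m+1) = 2 * α := by
      rw [Polynomial.coeff_mul]
      rw [Finset.sum_eq_single (m+1, 0)]
      · rw [hdiff, if_pos rfl, hRbk0, mul_one]
      · intro p hp hne
        rw [Finset.HasAntidiagonal.mem_antidiagonal] at hp
        have : p.1 ≠ m+1 := by
          intro h
          apply hne
          exact Prod.ext h (by omega)
        rw [hdiff p.1, if_neg this, zero_mul]
      · intro h
        exfalso; apply h
        rw [Finset.HasAntidiagonal.mem_antidiagonal]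
        simp
    constructor
    · intro l hl
      rw [hsplit, Polynomial.coeff_add, hterm1_low l hl, hterm2_low l hl, add_zero]
    · rw [hsplit, Polynomial.coeff_add, hterm1_top, hterm2_top]
      push_cast
      ring


lemma eval_bound_of_low_coeff_zero (W : ℝ[X]) (N : ℕ) (h : ∀ i ≤ N, W.coeff i = 0) :
    ∃ A ≥ (0:ℝ), ∀ y : ℝ, |y| ≤ 1 → |W.eval y| ≤ A * |y|^(N+1) := by
  refine ⟨∑ k ∈ Finset.range (W.natDegree+1), |W.coeff k|, Finset.sum_nonneg (fun _ _ => abs_nonneg _), ?_⟩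
  intro y hy
  rw [Polynomial.eval_eq_sum_range]
  calc |∑ k ∈ Finset.range (W.natDegree+1), W.coeff k * y^k|
      ≤ ∑ k ∈ Finset.range (W.natDegree+1), |W.coeff k * y^k| := Finset.abs_sum_le_sum_abs _ _
    _ ≤ ∑ k ∈ Finset.range (W.natDegree+1), |W.coeff k| * |y|^(N+1) := by
        apply Finset.sum_le_sum
        intro k _
        rw [abs_mul, abs_pow]
        rcases le_or_gt k N with hk | hk
        · rw [h k hk]
          simp only [abs_zero, zero_mul]
          positivity
        · apply mul_le_mul_of_nonneg_left _ (abs_nonneg _)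
          exact pow_le_pow_of_le_one (abs_nonneg _) hy (by omega)
    _ = (∑ k ∈ Finset.range (W.natDegree+1), |W.coeff k|) * |y|^(N+1) := by
        rw [Finset.sum_mul]

lemma poly_lipschitz (G : ℝ[X]) :
    ∃ L ≥ (0:ℝ), ∀ a b : ℝ, |a| ≤ 2 → |b| ≤ 2 → |G.eval a - G.eval b| ≤ L * |a - b| := by
  obtain ⟨L, hL⟩ := (isCompact_Icc (a := (-2:ℝ)) (b := 2)).exists_bound_of_continuousOn
    (f := fun z => G.derivative.eval z) (Polynomial.continuous _).continuousOn
  refine ⟨max L 0, le_max_right _ _, ?_⟩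
  intro a b ha hb
  have hconv : Convex ℝ (Set.Icc (-2:ℝ) 2) := convex_Icc _ _
  have hderiv : ∀ z ∈ Set.Icc (-2:ℝ) 2,
      HasDerivWithinAt (fun x => G.eval x) (G.derivative.eval z) (Set.Icc (-2:ℝ) 2) z :=
    fun z _ => (G.hasDerivAt z).hasDerivWithinAt
  have := hconv.norm_image_sub_le_of_norm_hasDerivWithin_le
    (f := fun x => G.eval x) (f' := fun z => G.derivative.eval z) (C := max L 0)
    hderiv (fun z hz => le_trans (hL z hz) (le_max_left _ _))
    (x := b) (y := a) (abs_le.1 hb) (abs_le.1 ha)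
  simpa [Real.norm_eq_abs] using this
section Main
open Polynomial

set_option maxHeartbeats 1000000 in
/-- Lagrange-inversion parity: if `Ψ(x) = x P(x) + α x^{2j+2} + O(x^{2j+3})`
with `P` even of degree `≤ 2j`, `P(0) = 1`, `α ≠ 0`, then a smooth local
inverse `Φ` of `Ψ` at `0` has an expansion of the same type. -/
theorem lagrange_inversion_parity
    (j : ℕ) (Ψ Φ : ℝ → ℝ)
    (hΨ : ∃ r > (0:ℝ), ContDiffOn ℝ (⊤ : ℕ∞) Ψ (Set.Ioo (-r) r))
    (P : Polynomial ℝ)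
    (hPdeg : P.natDegree ≤ 2*j) (hPeven : ∀ i : ℕ, Odd i → P.coeff i = 0)
    (hP0 : P.eval 0 = 1)
    (α C δ : ℝ) (hα : α ≠ 0) (hC : 0 < C) (hδ : 0 < δ)
    (hexp : ∀ x : ℝ, |x| < δ →
      |Ψ x - x * P.eval x - α * x ^ (2*j+2)| ≤ C * |x| ^ (2*j+3))
    (hΦ : ∃ r > (0:ℝ), ContDiffOn ℝ (⊤ : ℕ∞) Φ (Set.Ioo (-r) r))
    (hinv : ∃ r > (0:ℝ), ∀ x : ℝ, |x| < r → Φ (Ψ x) = x) :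
    ∃ Q : Polynomial ℝ,
      Q.natDegree ≤ 2*j ∧ (∀ i : ℕ, Odd i → Q.coeff i = 0) ∧
      Q.eval 0 = 1 ∧
      ∃ β : ℝ, β ≠ 0 ∧ ∃ C' > (0:ℝ), ∃ δ' > (0:ℝ), ∀ x : ℝ, |x| < δ' →
        |Φ x - x * Q.eval x - β * x ^ (2*j+2)| ≤ C' * |x| ^ (2*j+3) := by
  obtain ⟨rΨ, hrΨ, hΨc⟩ := hΨ
  obtain ⟨rI, hrI, hI⟩ := hinv
  clear hΦ
  have hP0' : P.coeff 0 = 1 := by rwa [Polynomial.coeff_zero_eq_eval_zero]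
  set R : ℝ[X] := P + Polynomial.C α * X^(2*j+1) with hRdef
  set Rb : ℝ[X] := P - Polynomial.C α * X^(2*j+1) with hRbdef
  have hXc : ∀ l : ℕ, (Polynomial.C α * X^(2*j+1) : ℝ[X]).coeff l = if l = 2*j+1 then α else 0 := by
    intro l
    rw [Polynomial.coeff_C_mul, Polynomial.coeff_X_pow]
    split_ifs with h <;> simp
  have hR0 : R.coeff 0 = 1 := by
    rw [hRdef, Polynomial.coeff_add, hXc, if_neg (by omega), add_zero, hP0']
  have hRb0 : Rb.coeff 0 = 1 := by
    rw [hRbdef, Polynomial.coeff_sub, hXc, if_neg (by omega), sub_zero, hP0']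
  obtain ⟨G, hGdeg, hG⟩ := exists_trunc_inv R hR0 (2*j+2)
  -- basic coefficients of G
  have hRk0 : ∀ k : ℕ, (R^k).coeff 0 = 1 := by
    intro k
    rw [Polynomial.coeff_zero_eq_eval_zero, Polynomial.eval_pow,
      ← Polynomial.coeff_zero_eq_eval_zero, hR0, one_pow]
  have hRbk0 : ∀ k : ℕ, (Rb^k).coeff 0 = 1 := by
    intro k
    rw [Polynomial.coeff_zero_eq_eval_zero, Polynomial.eval_pow,
      ← Polynomial.coeff_zero_eq_eval_zero, hRb0, one_pow]
  have hg0 : G.coeff 0 = 0 := by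
    have h0 := hG 0 (by omega)
    rw [coeff_comp_mul_X, Finset.sum_range_one, Nat.sub_self, hRk0, mul_one,
      Polynomial.coeff_X_zero] at h0
    exact h0
  have hg1 : G.coeff 1 = 1 := by
    have h1 := hG 1 (by omega)
    rw [coeff_comp_mul_X, Finset.sum_range_succ, Finset.sum_range_one, hg0, zero_mul,
      zero_add, Nat.sub_self, hRk0, mul_one, Polynomial.coeff_X_one] at h1
    exact h1
  -- P is even as a polynomial
  have hPcomp : P.comp (-X) = P := by
    apply Polynomial.ext
    intro i
    rw [coeff_comp_neg_X]
    rcases Nat.even_or_odd i with he | ho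
    · rw [he.neg_one_pow, one_mul]
    · rw [hPeven i ho, mul_zero]
  have hXRcomp : (X*R).comp (-X) = -(X*Rb) := by
    rw [Polynomial.mul_comp, Polynomial.X_comp, hRdef, Polynomial.add_comp,
      Polynomial.mul_comp, Polynomial.C_comp, Polynomial.pow_comp, Polynomial.X_comp,
      hPcomp, Odd.neg_pow ⟨j, by ring⟩, hRbdef]
    ring
  -- the reflected polynomial Gbar
  set Gb : ℝ[X] := -(G.comp (-X)) with hGbdef
  have hGbcoeff : ∀ i : ℕ, Gb.coeff i = -((-1)^i * G.coeff i) := by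
    intro i
    rw [hGbdef, Polynomial.coeff_neg, coeff_comp_neg_X]
  have hGbcomp : ∀ i ≤ 2*j+2, (Gb.comp (X*Rb)).coeff i = (X:ℝ[X]).coeff i := by
    intro i hi
    have hcomp : Gb.comp (X*Rb) = -((G.comp (X*R)).comp (-X)) := by
      simp only [hGbdef, Polynomial.neg_comp, Polynomial.comp_assoc, hXRcomp,
        Polynomial.X_comp]
    rw [hcomp, Polynomial.coeff_neg, coeff_comp_neg_X, hG i hi, Polynomial.coeff_X]
    rcases eq_or_ne i 1 with h1 | h1
    · subst h1; norm_num
    · rw [if_neg (fun h => h1 h.symm)]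
      ring
  -- difference of compositions with X*R and X*Rb
  have hpow := pow_diff_coeff P α (2*j) hP0'
  simp only [← hRdef, ← hRbdef] at hpow
  have hdiffcomp : ∀ i : ℕ, (G.comp (X*R)).coeff i - (G.comp (X*Rb)).coeff i
      = ∑ k ∈ Finset.range (i+1), G.coeff k * ((R^k - Rb^k).coeff (i-k)) := by
    intro i
    rw [coeff_comp_mul_X, coeff_comp_mul_X, ← Finset.sum_sub_distrib]
    apply Finset.sum_congr rfl
    intro k _
    rw [Polynomial.coeff_sub]
    ring
  have hGRb_low : ∀ i ≤ 2*j+1, (G.comp (X*Rb)).coeff i = (X:ℝ[X]).coeff i := by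
    intro i hi
    have hz : (G.comp (X*R)).coeff i - (G.comp (X*Rb)).coeff i = 0 := by
      rw [hdiffcomp]
      apply Finset.sum_eq_zero
      intro k hk
      rw [Finset.mem_range] at hk
      rcases Nat.eq_zero_or_pos k with hk0 | hk0
      · subst hk0; rw [hg0, zero_mul]
      · rw [(hpow k).1 (i-k) (by omega), mul_zero]
    have := hG i (by omega)
    linarith [hz, this]
  have hGRb_top : (G.comp (X*Rb)).coeff (2*j+2) = -(2*α) := by
    have hz : (G.comp (X*R)).coeff (2*j+2) - (G.comp (X*Rb)).coeff (2*j+2) = 2*α := by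
      rw [hdiffcomp]
      rw [Finset.sum_eq_single 1]
      · have h1 := (hpow 1).2
        have hidx : 2*j+2 - 1 = 2*j+1 := by omega
        rw [hg1, one_mul, hidx, pow_one, pow_one] at *
        rw [h1]
        push_cast
        ring
      · intro k hk hne
        rw [Finset.mem_range] at hk
        rcases Nat.eq_zero_or_pos k with hk0 | hk0
        · subst hk0; rw [hg0, zero_mul]
        · have hk2 : 2 ≤ k := by omega
          rw [(hpow k).1 (2*j+2-k) (by omega), mul_zero]
      · intro h
        exact absurd (Finset.mem_range.2 (by omega)) h
    have hX2 : (X:ℝ[X]).coeff (2*j+2) = 0 := by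
      rw [Polynomial.coeff_X, if_neg (by omega)]
    have := hG (2*j+2) le_rfl
    rw [this, hX2] at hz
    linarith
  -- even coefficients of G vanish
  have hDzero : ∀ i ≤ 2*j+1, (G - Gb).coeff i = 0 := by
    apply coeff_zero_of_comp_zero Rb (G - Gb) hRb0
    intro i hi
    rw [Polynomial.sub_comp, Polynomial.coeff_sub, hGRb_low i hi,
      hGbcomp i (by omega), sub_self]
  have heven : ∀ i ≤ 2*j+1, Even i → G.coeff i = 0 := by
    intro i hi he
    have := hDzero i hi
    rw [Polynomial.coeff_sub, hGbcoeff, he.neg_one_pow, one_mul] at this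
    linarith
  -- top coefficient of G
  have htop : G.coeff (2*j+2) = -α := by
    have hz : ((G - Gb).comp (X*Rb)).coeff (2*j+2) = -(2*α) := by
      rw [Polynomial.sub_comp, Polynomial.coeff_sub, hGRb_top, hGbcomp (2*j+2) le_rfl,
        Polynomial.coeff_X, if_neg (by omega), sub_zero]
    rw [coeff_comp_mul_X, Finset.sum_range_succ] at hz
    have hrest : ∑ k ∈ Finset.range (2*j+2), (G - Gb).coeff k * ((Rb^k).coeff (2*j+2-k)) = 0 := by
      apply Finset.sum_eq_zero
      intro k hk
      rw [Finset.mem_range] at hk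
      rw [hDzero k (by omega), zero_mul]
    rw [hrest, zero_add, Nat.sub_self, hRbk0, mul_one, Polynomial.coeff_sub,
      hGbcoeff, Even.neg_one_pow (⟨j+1, by ring⟩ : Even (2*j+2)), one_mul] at hz
    linarith
  -- construct Q
  set Q : ℝ[X] := ∑ k ∈ Finset.range (2*j+1), Polynomial.monomial k (G.coeff (k+1)) with hQdef
  have hQcoeff : ∀ k : ℕ, Q.coeff k = if k < 2*j+1 then G.coeff (k+1) else 0 := by
    intro k
    rw [hQdef, Polynomial.finset_sum_coeff]
    simp only [Polynomial.coeff_monomial]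
    rw [Finset.sum_ite_eq' (Finset.range (2*j+1)) k (fun i => G.coeff (i+1))]
    simp [Finset.mem_range]
  have hQdeg : Q.natDegree ≤ 2*j := by
    rw [Polynomial.natDegree_le_iff_coeff_eq_zero]
    intro k hk
    rw [hQcoeff, if_neg (by omega)]
  have hQodd : ∀ i : ℕ, Odd i → Q.coeff i = 0 := by
    intro i hodd
    rw [hQcoeff]
    rcases lt_or_ge i (2*j+1) with hi | hi
    · rw [if_pos hi]
      apply heven (i+1) (by omega)
      rcases hodd with ⟨t, ht⟩
      exact ⟨t+1, by omega⟩
    · rw [if_neg (by omega)]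
  have hQ0 : Q.eval 0 = 1 := by
    rw [← Polynomial.coeff_zero_eq_eval_zero, hQcoeff, if_pos (by omega), hg1]
  -- the key identity
  have hGQ : G = X * Q + Polynomial.C (-α) * X^(2*j+2) := by
    apply Polynomial.ext
    intro i
    rw [Polynomial.coeff_add, Polynomial.coeff_C_mul, Polynomial.coeff_X_pow]
    match i with
    | 0 =>
      rw [Polynomial.mul_coeff_zero, Polynomial.coeff_X_zero, zero_mul, hg0,
        if_neg (by omega), mul_zero, add_zero]
    | (k+1) =>
      rw [Polynomial.coeff_X_mul, hQcoeff]
      rcases lt_or_ge k (2*j+1) with hk | hk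
      · rw [if_pos hk, if_neg (by omega), mul_zero, add_zero]
      · rcases eq_or_lt_of_le hk with hke | hkl
        · have hk1 : k + 1 = 2*j+2 := by omega
          rw [if_neg (by omega), if_pos hk1, mul_one, zero_add, hk1, htop]
        · rw [if_neg (by omega), if_neg (by omega), mul_zero, add_zero]
          exact Polynomial.coeff_eq_zero_of_natDegree_lt (by omega)
  -- ==== analytic part ====
  refine ⟨Q, hQdeg, hQodd, hQ0, -α, neg_ne_zero.2 hα, ?_⟩
  set S : ℝ[X] := X * R with hSdef
  have hSeval : ∀ y : ℝ, S.eval y = y * P.eval y + α * y^(2*j+2) := by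
    intro y
    rw [hSdef, Polynomial.eval_mul, Polynomial.eval_X, hRdef, Polynomial.eval_add,
      Polynomial.eval_mul, Polynomial.eval_C, Polynomial.eval_pow, Polynomial.eval_X]
    ring
  have hWc : ∀ i ≤ 2*j+2, (G.comp S - X).coeff i = 0 := by
    intro i hi
    rw [Polynomial.coeff_sub, hG i hi, sub_self]
  obtain ⟨A, hA0, hA⟩ := eval_bound_of_low_coeff_zero (G.comp S - X) (2*j+2) hWc
  obtain ⟨L, hL0, hLip⟩ := poly_lipschitz G
  set F : ℝ → ℝ := fun y => |P.eval y - 1| + |α| * |y|^(2*j+1) + C * |y|^(2*j+2) with hFdef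
  have hF0 : F 0 = 0 := by simp [hFdef, hP0]
  have hFcont : Continuous F := by
    exact ((((Polynomial.continuous P).sub continuous_const).abs).add
      (continuous_const.mul (continuous_abs.pow _))).add
      (continuous_const.mul (continuous_abs.pow _))
  have hFev : ∀ᶠ y in nhds (0:ℝ), F y < 1/2 :=
    Filter.Tendsto.eventually_lt_const (by rw [hF0]; norm_num) hFcont.continuousAt
  rw [Metric.eventually_nhds_iff] at hFev
  obtain ⟨ε, hε, hFε⟩ := hFev
  set δ₁ : ℝ := min (min (ε/2) (δ/2)) (min (min (rΨ/2) (rI/2)) 1) with hδ₁def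
  have hδ₁pos : 0 < δ₁ := by
    simp only [hδ₁def, lt_min_iff]
    exact ⟨⟨by linarith, by linarith⟩, ⟨by linarith, by linarith⟩, by norm_num⟩
  have hδ₁ε : δ₁ ≤ ε/2 := le_trans (min_le_left _ _) (min_le_left _ _)
  have hδ₁δ : δ₁ ≤ δ/2 := le_trans (min_le_left _ _) (min_le_right _ _)
  have hδ₁Ψ : δ₁ ≤ rΨ/2 :=
    le_trans (min_le_right _ _) (le_trans (min_le_left _ _) (min_le_left _ _))
  have hδ₁I : δ₁ ≤ rI/2 :=
    le_trans (min_le_right _ _) (le_trans (min_le_left _ _) (min_le_right _ _))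
  have hδ₁1 : δ₁ ≤ 1 := le_trans (min_le_right _ _) (min_le_right _ _)
  have hFsmall : ∀ y : ℝ, |y| ≤ δ₁ → F y ≤ 1/2 := by
    intro y hy
    have hd : dist y 0 < ε := by
      rw [Real.dist_eq, sub_zero]
      linarith
    exact le_of_lt (hFε hd)
  have hFmul : ∀ y : ℝ, |y| * F y
      = |y| * |P.eval y - 1| + |α| * |y|^(2*j+2) + C * |y|^(2*j+3) := by
    intro y
    rw [hFdef]
    simp only
    rw [pow_succ |y| (2*j+2), pow_succ |y| (2*j+1)]
    ring
  have habs : ∀ y : ℝ, |y| ≤ δ₁ → |Ψ y - y| ≤ |y| * (1/2) := by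
    intro y hy
    have hyδ : |y| < δ := by linarith
    have h1 := hexp y hyδ
    have key : Ψ y - y = (Ψ y - y * P.eval y - α * y^(2*j+2))
        + (y * (P.eval y - 1) + α * y^(2*j+2)) := by ring
    have h2 : |Ψ y - y| ≤ C * |y|^(2*j+3) + (|y| * |P.eval y - 1| + |α| * |y|^(2*j+2)) := by
      rw [key]
      refine le_trans (abs_add_le _ _) (add_le_add h1 ?_)
      refine le_trans (abs_add_le _ _) ?_
      rw [abs_mul, abs_mul, abs_pow]
    have h5 : |y| * F y ≤ |y| * (1/2) :=
      mul_le_mul_of_nonneg_left (hFsmall y hy) (abs_nonneg y)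
    rw [hFmul] at h5
    linarith
  have hSabs : ∀ y : ℝ, |y| ≤ δ₁ → |S.eval y - y| ≤ |y| * (1/2) := by
    intro y hy
    have key : S.eval y - y = y * (P.eval y - 1) + α * y^(2*j+2) := by
      rw [hSeval]; ring
    have h2 : |S.eval y - y| ≤ |y| * |P.eval y - 1| + |α| * |y|^(2*j+2) := by
      rw [key]
      refine le_trans (abs_add_le _ _) ?_
      rw [abs_mul, abs_mul, abs_pow]
    have h5 : |y| * F y ≤ |y| * (1/2) :=
      mul_le_mul_of_nonneg_left (hFsmall y hy) (abs_nonneg y)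
    rw [hFmul] at h5
    have hpos : 0 ≤ C * |y|^(2*j+3) := by positivity
    linarith
  have hALC : 0 ≤ A + L*C := by positivity
  have hC'pos : 0 < (A + L*C) * 2^(2*j+3) + 1 := by positivity
  refine ⟨(A + L*C) * 2^(2*j+3) + 1, hC'pos, δ₁/2, by linarith, ?_⟩
  intro x hx
  have hΨcont : ContinuousOn Ψ (Set.Icc (-δ₁) δ₁) := by
    apply (hΨc.continuousOn).mono
    intro z hz
    simp only [Set.mem_Icc] at hz
    simp only [Set.mem_Ioo]
    constructor <;> linarith [hz.1, hz.2]
  have hΨd : |Ψ δ₁ - δ₁| ≤ δ₁ * (1/2) := by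
    have h := habs δ₁ (le_of_eq (abs_of_pos hδ₁pos))
    rwa [abs_of_pos hδ₁pos] at h
  have hΨd' : |Ψ (-δ₁) - (-δ₁)| ≤ δ₁ * (1/2) := by
    have h := habs (-δ₁) (by rw [abs_neg, abs_of_pos hδ₁pos])
    rwa [abs_neg, abs_of_pos hδ₁pos] at h
  have hx1 : x ≤ Ψ δ₁ := by
    have h1 := (abs_le.1 hΨd).1
    have h2 := (abs_lt.1 hx).2
    linarith
  have hx2 : Ψ (-δ₁) ≤ x := by
    have h1 := (abs_le.1 hΨd').2
    have h2 := (abs_lt.1 hx).1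
    linarith
  obtain ⟨y, hymem, hyx⟩ :=
    intermediate_value_Icc (by linarith : (-δ₁) ≤ δ₁) hΨcont ⟨hx2, hx1⟩
  have hyabs : |y| ≤ δ₁ := abs_le.2 ⟨hymem.1, hymem.2⟩
  have hΦx : Φ x = y := by
    rw [← hyx]
    exact hI y (by linarith [hyabs, hδ₁I, hrI])
  have hy2x : |y| ≤ 2 * |x| := by
    have h1 := habs y hyabs
    have h2 := abs_sub_abs_le_abs_sub y (Ψ y)
    rw [abs_sub_comm y (Ψ y)] at h2
    have h3 : |Ψ y| = |x| := by rw [hyx]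
    linarith
  have hy1 : |y| ≤ 1 := le_trans hyabs hδ₁1
  have hWy := hA y hy1
  have hWev : (G.comp S - X).eval y = G.eval (S.eval y) - y := by
    rw [Polynomial.eval_sub, Polynomial.eval_comp, Polynomial.eval_X]
  have hΨyS : |S.eval y - Ψ y| ≤ C * |y|^(2*j+3) := by
    rw [show S.eval y - Ψ y = -(Ψ y - y * P.eval y - α * y^(2*j+2)) from by
      rw [hSeval]; ring, abs_neg]
    exact hexp y (by linarith)
  have hΨyb : |Ψ y| ≤ 2 := by
    have h1 := habs y hyabs
    have h2 := abs_sub_abs_le_abs_sub (Ψ y) y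
    linarith
  have hSyb : |S.eval y| ≤ 2 := by
    have h1 := hSabs y hyabs
    have h2 := abs_sub_abs_le_abs_sub (S.eval y) y
    linarith
  have hLipy := hLip (S.eval y) (Ψ y) hSyb hΨyb
  have hGx : G.eval x = x * Q.eval x + (-α) * x^(2*j+2) := by
    conv_lhs => rw [hGQ]
    rw [Polynomial.eval_add, Polynomial.eval_mul, Polynomial.eval_X, Polynomial.eval_mul,
      Polynomial.eval_C, Polynomial.eval_pow, Polynomial.eval_X]
  have hmain : |Φ x - x * Q.eval x - (-α) * x^(2*j+2)| ≤ (A + L*C) * |y|^(2*j+3) := by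
    have hid : Φ x - x * Q.eval x - (-α) * x^(2*j+2)
        = (y - G.eval (S.eval y)) + (G.eval (S.eval y) - G.eval (Ψ y)) := by
      rw [hΦx, sub_sub, ← hGx, ← hyx]
      ring
    rw [hid]
    have e1 : |y - G.eval (S.eval y)| ≤ A * |y|^(2*j+3) := by
      rw [show y - G.eval (S.eval y) = -((G.comp S - X).eval y) from by rw [hWev]; ring,
        abs_neg]
      exact hWy
    have e2 : |G.eval (S.eval y) - G.eval (Ψ y)| ≤ L * (C * |y|^(2*j+3)) :=
      le_trans hLipy (mul_le_mul_of_nonneg_left hΨyS hL0)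
    calc |(y - G.eval (S.eval y)) + (G.eval (S.eval y) - G.eval (Ψ y))|
        ≤ |y - G.eval (S.eval y)| + |G.eval (S.eval y) - G.eval (Ψ y)| := abs_add_le _ _
      _ ≤ A * |y|^(2*j+3) + L * (C * |y|^(2*j+3)) := add_le_add e1 e2
      _ = (A + L*C) * |y|^(2*j+3) := by ring
  have hyp : |y|^(2*j+3) ≤ 2^(2*j+3) * |x|^(2*j+3) := by
    calc |y|^(2*j+3) ≤ (2*|x|)^(2*j+3) := pow_le_pow_left₀ (abs_nonneg y) hy2x _
      _ = 2^(2*j+3) * |x|^(2*j+3) := by rw [mul_pow]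
  have hxp : (0:ℝ) ≤ |x|^(2*j+3) := by positivity
  calc |Φ x - x * Q.eval x - (-α) * x^(2*j+2)| ≤ (A + L*C) * |y|^(2*j+3) := hmain
    _ ≤ (A + L*C) * (2^(2*j+3) * |x|^(2*j+3)) := mul_le_mul_of_nonneg_left hyp hALC
    _ ≤ ((A + L*C) * 2^(2*j+3) + 1) * |x|^(2*j+3) := by nlinarith

end Main
end
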